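/- arXiv:2403.02064 — 3 statements merged into one kernel-verified Lean document; each statement's English description precedes it below -/
import Mathlib

section
/- Let H be an r-uniform hypergraph and let ∂H be its 2-shadow multigraph. Then ρ(H) ≤ ρ(∂H)/(r−1), where ρ(H) is the spectral radius of the adjacency tensor of H and ρ(∂H) is the spectral radius of the adjacency matrix of ∂H. -/
open Finset

variable {V : Type*} [Fintype V] [DecidableEq V]

/-- The degree of a vertex: the number of hyperedges containing it. -/
def hdeg (E : Finset (Finset V)) (v : V) : ℕ :=
  (E.filter (fun e => v ∈ e)).card

open Classical in
/-- The neighborhood of a vertex: vertices at distance exactly one. -/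
noncomputable def nbrs (E : Finset (Finset V)) (v : V) : Finset V :=
  Finset.univ.filter (fun u => u ≠ v ∧ ∃ e ∈ E, v ∈ e ∧ u ∈ e)

/-- `E` is the edge set of an `r`-uniform hypergraph. -/
def Uniform (E : Finset (Finset V)) (r : ℕ) : Prop := ∀ e ∈ E, e.card = r

/-- A hypergraph is linear if any two distinct edges share at most one vertex. -/
def LinearH (E : Finset (Finset V)) : Prop :=
  ∀ e₁ ∈ E, ∀ e₂ ∈ E, e₁ ≠ e₂ → (e₁ ∩ e₂).card ≤ 1

/-- `lam` is an eigenvalue of the adjacency tensor of the `r`-uniform hypergraph `E`: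
there is a nonzero complex vector `x` with `A(H) x^{r-1} = lam x^{[r-1]}`. -/
def IsAdjEigenvalue (E : Finset (Finset V)) (r : ℕ) (lam : ℂ) : Prop :=
  ∃ x : V → ℂ, x ≠ 0 ∧ ∀ v : V,
    ∑ e ∈ E.filter (fun e => v ∈ e), ∏ u ∈ e.erase v, x u = lam * (x v) ^ (r - 1)

/-- The spectral radius of the adjacency tensor: max modulus of eigenvalues. -/
noncomputable def specRad (E : Finset (Finset V)) (r : ℕ) : ℝ :=
  sSup {z : ℝ | ∃ lam : ℂ, IsAdjEigenvalue E r lam ∧ z = ‖lam‖}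

/-- The adjacency matrix of the 2-shadow multigraph of `E`. -/
noncomputable def shadowMatrix (E : Finset (Finset V)) : Matrix V V ℝ :=
  fun u v => if u = v then 0 else ((E.filter (fun e => u ∈ e ∧ v ∈ e)).card : ℝ)

/-- The spectral radius of a real matrix: max modulus of complex eigenvalues. -/
noncomputable def matSpecRad (A : Matrix V V ℝ) : ℝ :=
  sSup {z : ℝ | ∃ (lam : ℂ) (x : V → ℂ), x ≠ 0 ∧
    (A.map (Complex.ofReal)).mulVec x = lam • x ∧ z = ‖lam‖}

/-- The number of 1-walks starting at `u`: pairs `(e, v)` with `u ∈ e`, `v ∈ e`, `v ≠ u`. -/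
def w1 (E : Finset (Finset V)) (u : V) : ℕ :=
  ((E ×ˢ (univ : Finset V)).filter
    (fun p => u ∈ p.1 ∧ p.2 ∈ p.1 ∧ p.2 ≠ u)).card

/-- The number of 2-walks starting at `u`. -/
def w2 (E : Finset (Finset V)) (u : V) : ℕ :=
  (((E ×ˢ (univ : Finset V)) ×ˢ (E ×ˢ (univ : Finset V))).filter
    (fun p => u ∈ p.1.1 ∧ p.1.2 ∈ p.1.1 ∧ p.1.2 ≠ u ∧
      p.1.2 ∈ p.2.1 ∧ p.2.2 ∈ p.2.1 ∧ p.2.2 ≠ p.1.2)).card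

/-- `E` contains a Berge triangle. -/
def HasBergeC3 (E : Finset (Finset V)) : Prop :=
  ∃ e₁ ∈ E, ∃ e₂ ∈ E, ∃ e₃ ∈ E, ∃ v₁ v₂ v₃ : V,
    e₁ ≠ e₂ ∧ e₂ ≠ e₃ ∧ e₁ ≠ e₃ ∧ v₁ ≠ v₂ ∧ v₂ ≠ v₃ ∧ v₁ ≠ v₃ ∧
    v₁ ∈ e₁ ∧ v₂ ∈ e₁ ∧ v₂ ∈ e₂ ∧ v₃ ∈ e₂ ∧ v₃ ∈ e₃ ∧ v₁ ∈ e₃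

/-- `E` contains a Berge-`K_{s,t}`: disjoint vertex sets `S`, `T` of sizes `s`, `t`
and an injective assignment of distinct hyperedges to the pairs. -/
def HasBergeKst (E : Finset (Finset V)) (s t : ℕ) : Prop :=
  ∃ (S T : Finset V) (f : V → V → Finset V),
    S.card = s ∧ T.card = t ∧ Disjoint S T ∧
    (∀ a ∈ S, ∀ b ∈ T, f a b ∈ E ∧ a ∈ f a b ∧ b ∈ f a b) ∧
    (∀ a ∈ S, ∀ b ∈ T, ∀ a' ∈ S, ∀ b' ∈ T, f a b = f a' b' → a = a' ∧ b = b')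

/-- `E` contains a Berge-`K_{s,t}` with the `s`-side inside `V₁` and the `t`-side
inside `V₂`. -/
def HasBergeKstIn (E : Finset (Finset V)) (s t : ℕ) (V₁ V₂ : Finset V) : Prop :=
  ∃ (S T : Finset V) (f : V → V → Finset V),
    S ⊆ V₁ ∧ T ⊆ V₂ ∧ S.card = s ∧ T.card = t ∧ Disjoint S T ∧
    (∀ a ∈ S, ∀ b ∈ T, f a b ∈ E ∧ a ∈ f a b ∧ b ∈ f a b) ∧
    (∀ a ∈ S, ∀ b ∈ T, ∀ a' ∈ S, ∀ b' ∈ T, f a b = f a' b' → a = a' ∧ b = b')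

/-- `E` is hm-bipartite with head part `V₁` and mass part `V₂`: each edge meets
`V₁` in exactly one vertex and `V₂` in the other `r−1` vertices. -/
def HmBipartite (E : Finset (Finset V)) (r : ℕ) (V₁ V₂ : Finset V) : Prop :=
  Disjoint V₁ V₂ ∧ V₁ ∪ V₂ = Finset.univ ∧
  ∀ e ∈ E, (e ∩ V₁).card = 1 ∧ (e ∩ V₂).card = r - 1

/-- The generalized binomial coefficient `C(x, k) = x(x−1)⋯(x−k+1)/k!` for real `x`. -/
noncomputable def genBinom (x : ℝ) (k : ℕ) : ℝ :=
  (descPochhammer ℝ k).eval x / (Nat.factorial k)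


/-! Let `(λ, x)` be an eigenpair of the adjacency tensor and `y = |x|`. The eigenvalue equation
gives `|λ| ∑ y_v ^ r ≤ r ∑_e ∏_{u ∈ e} y_u`. Put `z = y ^ (r / 2)`. AM-GM over the `r (r - 1)`
ordered pairs of distinct vertices of an edge gives `r (r - 1) ∏_{u ∈ e} y_u ≤ ∑_{u ≠ v ∈ e} z_u z_v`,
and summed over the edges this is the quadratic form `zᵀ A(∂H) z ≤ ρ(∂H) ‖z‖² = ρ(∂H) ∑ y_v ^ r`. -/

open Module Matrix

theorem Real.prod_le_arith_mean_pow {ι : Type*} (s : Finset ι) (a : ι → ℝ)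
    (ha : ∀ i ∈ s, 0 ≤ a i) : ∏ i ∈ s, a i ≤ ((∑ i ∈ s, a i) / #s) ^ #s := by
  rcases s.eq_empty_or_nonempty with rfl | hs
  · simp
  have hn : #s ≠ 0 := hs.card_pos.ne'
  have amgm := Real.geom_mean_le_arith_mean_weighted s (fun _ => (#s : ℝ)⁻¹) a
    (fun _ _ => by positivity) (by simp [hn]) ha
  rw [← Finset.mul_sum, inv_mul_eq_div] at amgm
  calc ∏ i ∈ s, a i = (∏ i ∈ s, a i ^ (#s : ℝ)⁻¹) ^ #s := by
        rw [← Finset.prod_pow]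
        exact Finset.prod_congr rfl fun i hi => (Real.rpow_inv_natCast_pow (ha i hi) hn).symm
    _ ≤ _ := by gcongr; exact Finset.prod_nonneg fun i hi => Real.rpow_nonneg (ha i hi) _

section OffDiag

variable {α M : Type*} [DecidableEq α] [CommMonoid M]

theorem Finset.prod_offDiag_fst (s : Finset α) (f : α → M) :
    ∏ p ∈ s.offDiag, f p.1 = ∏ a ∈ s, f a ^ (#s - 1) := by
  rw [Finset.prod_finset_product _ s (fun a => s.erase a) (by aesop)]
  exact Finset.prod_congr rfl fun a ha => by simp [Finset.card_erase_of_mem ha]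

theorem Finset.prod_offDiag_snd (s : Finset α) (f : α → M) :
    ∏ p ∈ s.offDiag, f p.2 = ∏ a ∈ s, f a ^ (#s - 1) := by
  rw [Finset.prod_finset_product_right _ s (fun a => s.erase a) (by aesop)]
  exact Finset.prod_congr rfl fun a ha => by simp [Finset.card_erase_of_mem ha]

end OffDiag

/-- AM-GM: the product of all `z u * z v` over `e.offDiag` is `(∏ u ∈ e, y u) ^ #e.offDiag`. -/
theorem Finset.card_offDiag_mul_prod_le_sum {ι : Type*} [DecidableEq ι] (e : Finset ι)
    {y z : ι → ℝ} (hy : ∀ u ∈ e, 0 ≤ y u) (hz : ∀ u ∈ e, 0 ≤ z u)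
    (hyz : ∀ u ∈ e, z u ^ 2 = y u ^ #e) :
    #e.offDiag * ∏ u ∈ e, y u ≤ ∑ p ∈ e.offDiag, z p.1 * z p.2 := by
  have hz' : ∀ p ∈ e.offDiag, 0 ≤ z p.1 * z p.2 := fun p hp => by
    rw [mem_offDiag] at hp; exact mul_nonneg (hz _ hp.1) (hz _ hp.2.1)
  rcases Nat.eq_zero_or_pos #e.offDiag with hN | hN
  · rw [hN, Nat.cast_zero, zero_mul]; exact Finset.sum_nonneg hz'
  have hprod : ∏ p ∈ e.offDiag, z p.1 * z p.2 = (∏ u ∈ e, y u) ^ #e.offDiag := by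
    rw [Finset.prod_mul_distrib, prod_offDiag_fst, prod_offDiag_snd, ← Finset.prod_mul_distrib,
      ← Finset.prod_pow, offDiag_card]
    refine Finset.prod_congr rfl fun u hu => ?_
    rw [← mul_pow, ← sq, hyz u hu, ← pow_mul, Nat.mul_sub_one, ← sq]
  have amgm := Real.prod_le_arith_mean_pow e.offDiag _ hz'
  rw [hprod, pow_le_pow_iff_left₀ (Finset.prod_nonneg hy)
    (div_nonneg (Finset.sum_nonneg hz') (Nat.cast_nonneg _)) hN.ne'] at amgm
  rwa [le_div_iff₀' (by exact_mod_cast hN)] at amgm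

theorem LinearMap.IsSymmetric.inner_map_self_le {E : Type*} [NormedAddCommGroup E]
    [InnerProductSpace ℝ E] [FiniteDimensional ℝ E] {T : E →ₗ[ℝ] E} (hT : T.IsSymmetric)
    {c : ℝ} (hc : ∀ μ, End.HasEigenvalue T μ → μ ≤ c) (x : E) :
    inner ℝ (T x) x ≤ c * ‖x‖ ^ 2 := by
  let b := hT.eigenvectorBasis rfl
  have hTb (i) : inner ℝ (T x) (b i) = hT.eigenvalues rfl i * inner ℝ x (b i) := by
    rw [hT, hT.apply_eigenvectorBasis, real_inner_smul_right]; rfl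
  calc inner ℝ (T x) x = ∑ i, hT.eigenvalues rfl i * inner ℝ x (b i) ^ 2 := by
        simp_rw [← b.sum_inner_mul_inner (T x) x, hTb, real_inner_comm (b _) x, sq, mul_assoc]
    _ ≤ ∑ i, c * inner ℝ x (b i) ^ 2 := by
        gcongr with i
        exact hc _ (hT.hasEigenvalue_eigenvalues rfl i)
    _ = c * ‖x‖ ^ 2 := by rw [← Finset.mul_sum, b.sum_sq_inner_left]

theorem Matrix.mem_spectrum_of_mulVec_eq_smul {K n : Type*} [Field K] [Fintype n] [DecidableEq n]
    {A : Matrix n n K} {x : n → K} {μ : K} (hx : x ≠ 0) (h : A *ᵥ x = μ • x) :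
    μ ∈ spectrum K A := by
  rw [← Matrix.spectrum_toLin']
  exact (End.hasEigenvalue_of_hasEigenvector
    (End.hasEigenvector_iff.mpr ⟨End.mem_eigenspace_iff.mpr h, hx⟩)).mem_spectrum

section SpectralRadius

variable {ι : Type*} [Fintype ι]

theorem matSpecRad_nonneg (A : Matrix ι ι ℝ) : 0 ≤ matSpecRad A :=
  Real.sSup_nonneg fun _ ⟨_, _, _, _, hz⟩ => hz ▸ norm_nonneg _

theorem norm_le_matSpecRad [DecidableEq ι] {A : Matrix ι ι ℝ} {x : ι → ℂ} {μ : ℂ} (hx : x ≠ 0)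
    (h : A.map Complex.ofReal *ᵥ x = μ • x) : ‖μ‖ ≤ matSpecRad A := by
  refine le_csSup ?_ ⟨μ, x, hx, h, rfl⟩
  refine ((Matrix.finite_spectrum (A.map Complex.ofReal)).image (‖·‖)).bddAbove.mono ?_
  rintro _ ⟨μ', x', hx', h', rfl⟩
  exact ⟨μ', Matrix.mem_spectrum_of_mulVec_eq_smul hx' h', rfl⟩

theorem Matrix.IsHermitian.dotProduct_mulVec_le_matSpecRad [DecidableEq ι] {A : Matrix ι ι ℝ}
    (hA : A.IsHermitian) (z : ι → ℝ) : z ⬝ᵥ (A *ᵥ z) ≤ matSpecRad A * (z ⬝ᵥ z) := by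
  have hc : ∀ μ, End.HasEigenvalue (toEuclideanLin A) μ → μ ≤ matSpecRad A := by
    intro μ hμ
    obtain ⟨v, hv⟩ := hμ.exists_hasEigenvector
    have hAv : A *ᵥ v.ofLp = μ • v.ofLp := by
      simpa [toLpLin_apply] using congrArg WithLp.ofLp hv.apply_eq_smul
    refine (le_abs_self μ).trans ?_
    rw [← Real.norm_eq_abs, ← Complex.norm_real]
    refine norm_le_matSpecRad (x := Complex.ofReal ∘ v.ofLp) ?_ ?_
    · intro h0
      exact hv.2 (by ext i; simpa using congrFun h0 i)
    · ext i
      simpa [Matrix.mulVec, dotProduct] using congrArg Complex.ofReal (congrFun hAv i)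
  have := (isSymmetric_toEuclideanLin_iff.mpr hA).inner_map_self_le hc (WithLp.toLp 2 z)
  rw [EuclideanSpace.inner_eq_star_dotProduct, ← real_inner_self_eq_norm_sq,
    EuclideanSpace.inner_eq_star_dotProduct] at this
  simpa [toLpLin_apply, dotProduct_comm] using this

end SpectralRadius

section Shadow

variable {α : Type*} [DecidableEq α] (E : Finset (Finset α))

theorem shadowMatrix_apply (u v : α) : shadowMatrix E u v = #{e ∈ E | (u, v) ∈ e.offDiag} := by
  unfold shadowMatrix
  split_ifs with huv
  · simp [huv]
  · congr 2
    ext e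
    simp [huv]

theorem shadowMatrix_isHermitian : (shadowMatrix E).IsHermitian := by
  refine IsHermitian.ext fun u v => ?_
  simp only [star_trivial, shadowMatrix_apply, mem_offDiag]
  congr 2
  ext e
  simp only [mem_filter]
  tauto

theorem dotProduct_shadowMatrix_mulVec [Fintype α] (z : α → ℝ) :
    z ⬝ᵥ (shadowMatrix E *ᵥ z) = ∑ e ∈ E, ∑ p ∈ e.offDiag, z p.1 * z p.2 := by
  calc z ⬝ᵥ (shadowMatrix E *ᵥ z)
      = ∑ u, ∑ v, ∑ e ∈ E, if (u, v) ∈ e.offDiag then z u * z v else 0 := by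
        simp only [dotProduct, mulVec, shadowMatrix_apply, natCast_card_filter, mul_sum, sum_mul,
          ite_mul, one_mul, zero_mul, mul_ite, mul_zero]
    _ = ∑ e ∈ E, ∑ p : α × α, if p ∈ e.offDiag then z p.1 * z p.2 else 0 := by
        rw [← Fintype.sum_prod_type', Finset.sum_comm]
    _ = ∑ e ∈ E, ∑ p ∈ e.offDiag, z p.1 * z p.2 := by
        simp_rw [Finset.sum_ite_mem, Finset.univ_inter]

end Shadow

theorem norm_mul_sum_norm_pow_le {E : Finset (Finset V)} {r : ℕ} (hr : r ≠ 0)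
    (hU : Uniform E r) {x : V → ℂ} {lam : ℂ}
    (hx : ∀ v, ∑ e ∈ E.filter (fun e => v ∈ e), ∏ u ∈ e.erase v, x u = lam * x v ^ (r - 1)) :
    ‖lam‖ * ∑ v, ‖x v‖ ^ r ≤ r * ∑ e ∈ E, ∏ u ∈ e, ‖x u‖ := by
  have hv (v : V) : ‖lam‖ * ‖x v‖ ^ (r - 1)
      ≤ ∑ e ∈ E.filter (fun e => v ∈ e), ∏ u ∈ e.erase v, ‖x u‖ := by
    rw [← norm_pow, ← norm_mul, ← hx v]
    exact (norm_sum_le _ _).trans_eq (by simp_rw [norm_prod])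
  calc ‖lam‖ * ∑ v, ‖x v‖ ^ r = ∑ v, ‖lam‖ * ‖x v‖ ^ (r - 1) * ‖x v‖ := by
        rw [Finset.mul_sum]
        refine Finset.sum_congr rfl fun v _ => ?_
        rw [mul_assoc, ← pow_succ, Nat.sub_add_cancel (Nat.one_le_iff_ne_zero.mpr hr)]
    _ ≤ ∑ v, (∑ e ∈ E.filter (fun e => v ∈ e), ∏ u ∈ e.erase v, ‖x u‖) * ‖x v‖ := by
        gcongr with v; exact hv v
    _ = ∑ e ∈ E, ∑ v ∈ e, (∏ u ∈ e.erase v, ‖x u‖) * ‖x v‖ := by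
        simp_rw [Finset.sum_mul]
        exact Finset.sum_comm' (by simp; tauto)
    _ = r * ∑ e ∈ E, ∏ u ∈ e, ‖x u‖ := by
        rw [Finset.mul_sum]
        refine Finset.sum_congr rfl fun e he => ?_
        rw [Finset.sum_congr rfl fun v hv => Finset.prod_erase_mul e _ hv, Finset.sum_const,
          hU e he, nsmul_eq_mul]

theorem Uniform.mul_sum_prod_le_dotProduct_shadowMatrix_mulVec {E : Finset (Finset V)} {r : ℕ}
    (hU : Uniform E r) {y z : V → ℝ} (hy : ∀ v, 0 ≤ y v) (hz : ∀ v, 0 ≤ z v)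
    (hyz : ∀ v, z v ^ 2 = y v ^ r) :
    r * (r - 1) * ∑ e ∈ E, ∏ u ∈ e, y u ≤ z ⬝ᵥ (shadowMatrix E *ᵥ z) := by
  rw [dotProduct_shadowMatrix_mulVec, Finset.mul_sum]
  refine Finset.sum_le_sum fun e he => ?_
  have hcard : (#e.offDiag : ℝ) = r * (r - 1) := by
    rw [offDiag_card, hU e he, Nat.cast_sub (Nat.le_mul_self r)]
    push_cast
    ring
  rw [← hcard]
  exact e.card_offDiag_mul_prod_le_sum (fun u _ => hy u) (fun u _ => hz u)
    fun u _ => hU e he ▸ hyz u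

/-- spectral radius vs the 2-shadow. -/
theorem stmt4 {V : Type*} [Fintype V] [DecidableEq V]
    (E : Finset (Finset V)) (r : ℕ) (hr : 2 ≤ r) (hU : Uniform E r) :
    specRad E r ≤ matSpecRad (shadowMatrix E) / ((r:ℝ) - 1) := by
  have hr1 : (0 : ℝ) < r - 1 := by
    have : (2 : ℝ) ≤ r := by exact_mod_cast hr
    linarith
  refine Real.sSup_le ?_ (div_nonneg (matSpecRad_nonneg _) hr1.le)
  rintro _ ⟨lam, ⟨x, hx0, hx⟩, rfl⟩
  set y : V → ℝ := fun v => ‖x v‖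
  set z : V → ℝ := fun v => √(y v ^ r)
  have hzy (v : V) : z v ^ 2 = y v ^ r := Real.sq_sqrt (by positivity)
  have hpos : 0 < ∑ v, y v ^ r := by
    obtain ⟨v, hv⟩ := Function.ne_iff.mp hx0
    exact Finset.sum_pos' (fun v _ => by positivity) ⟨v, mem_univ v, by positivity⟩
  rw [le_div_iff₀ hr1]
  refine le_of_mul_le_mul_right ?_ hpos
  calc ‖lam‖ * (r - 1) * ∑ v, y v ^ r ≤ (r - 1) * (r * ∑ e ∈ E, ∏ u ∈ e, y u) := by
        rw [mul_right_comm, mul_comm]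
        exact mul_le_mul_of_nonneg_left (norm_mul_sum_norm_pow_le (by omega) hU hx) hr1.le
    _ = r * (r - 1) * ∑ e ∈ E, ∏ u ∈ e, y u := by ring
    _ ≤ z ⬝ᵥ (shadowMatrix E *ᵥ z) :=
        hU.mul_sum_prod_le_dotProduct_shadowMatrix_mulVec (fun _ => norm_nonneg _)
          (fun _ => by positivity) hzy
    _ ≤ matSpecRad (shadowMatrix E) * (z ⬝ᵥ z) :=
        (shadowMatrix_isHermitian E).dotProduct_mulVec_le_matSpecRad z
    _ = matSpecRad (shadowMatrix E) * ∑ v, y v ^ r := by simp_rw [dotProduct, ← sq, hzy]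
end

section
/- Let H be an (m,n)-hm-bipartite linear r-uniform hypergraph with head part V₁ (|V₁| = m) and mass part V₂ (|V₂| = n) that is Berge-C₃-free and exact Berge-K_{s,t}-free, with s ≥ 2, t ≥ 2 and m ≥ s. Then ∑_{v ∈ V₂} C(d(v), s) ≤ (t−1)·C(m, s), where d(v) is the degree of v and C(·,·) is the binomial coefficient. -/
/-!
For `v ∈ V₂`, linearity makes the heads of the edges through `v` distinct, so `v` is joined to
exactly `d(v)` heads, and `C(d(v), s)` counts the `s`-sets of heads all joined to `v`. Double
counting turns the sum into a sum, over the `s`-sets `S ⊆ V₁`, of the number of `v ∈ V₂` joined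
to every head in `S`. Were there `t` such vertices, an edge chosen for each pair would give an
exact Berge-`K_{s,t}`: an edge through a head of `S` and two of these vertices would, together
with a second head of `S`, create a Berge triangle or violate linearity.
-/

open Finset

variable {V : Type*} [Fintype V] [DecidableEq V]

theorem sum_card_choose_eq_sum_card_filter_subset {ι β : Type*} [DecidableEq β]
    (A : Finset β) (B : Finset ι) (N : ι → Finset β) (hN : ∀ v ∈ B, N v ⊆ A) (s : ℕ) :
    ∑ v ∈ B, (N v).card.choose s = ∑ S ∈ A.powersetCard s, (B.filter (S ⊆ N ·)).card := by
  calc ∑ v ∈ B, (N v).card.choose s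
      = ∑ v ∈ B, ((A.powersetCard s).bipartiteAbove (fun v S => S ⊆ N v) v).card :=
        sum_congr rfl fun v hv => by
          rw [← card_powersetCard, bipartiteAbove]
          congr 1
          ext S
          simp only [mem_powersetCard, mem_filter]
          exact ⟨fun ⟨hS, hc⟩ => ⟨⟨hS.trans (hN v hv), hc⟩, hS⟩, fun ⟨⟨_, hc⟩, hS⟩ => ⟨hS, hc⟩⟩
    _ = _ := sum_card_bipartiteAbove_eq_sum_card_bipartiteBelow _

section

variable {α : Type*} [DecidableEq α]

def headNbrs (E : Finset (Finset α)) (V₁ : Finset α) (v : α) : Finset α :=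
  V₁.filter (fun u => ∃ e ∈ E, v ∈ e ∧ u ∈ e)

theorem mem_headNbrs {E : Finset (Finset α)} {V₁ : Finset α} {u v : α} :
    u ∈ headNbrs E V₁ v ↔ u ∈ V₁ ∧ ∃ e ∈ E, v ∈ e ∧ u ∈ e :=
  mem_filter

theorem LinearH.eq_of_mem_of_mem {E : Finset (Finset α)} (hL : LinearH E)
    {e₁ e₂ : Finset α} (he₁ : e₁ ∈ E) (he₂ : e₂ ∈ E) {x y : α} (hxy : x ≠ y)
    (hx₁ : x ∈ e₁) (hy₁ : y ∈ e₁) (hx₂ : x ∈ e₂) (hy₂ : y ∈ e₂) : e₁ = e₂ := by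
  by_contra hne
  have hpair : ({x, y} : Finset α) ⊆ e₁ ∩ e₂ := by
    simp [insert_subset_iff, hx₁, hy₁, hx₂, hy₂]
  have htwo : 2 ≤ (e₁ ∩ e₂).card := card_pair hxy ▸ card_le_card hpair
  exact absurd (hL e₁ he₁ e₂ he₂ hne) (by omega)

theorem eq_of_mem_inter_of_card_le_one {e V₁ : Finset α} (h : (e ∩ V₁).card ≤ 1) {a a' : α}
    (ha : a ∈ e) (haV : a ∈ V₁) (ha' : a' ∈ e) (ha'V : a' ∈ V₁) : a = a' :=
  card_le_one.mp h a (mem_inter.mpr ⟨ha, haV⟩) a' (mem_inter.mpr ⟨ha', ha'V⟩)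

/-- By linearity, the edges through `v ∉ V₁` have distinct heads. -/
theorem card_headNbrs {E : Finset (Finset α)} {V₁ : Finset α} (hL : LinearH E)
    (hhead : ∀ e ∈ E, (e ∩ V₁).card = 1) {v : α} (hv : v ∉ V₁) :
    (headNbrs E V₁ v).card = hdeg E v := by
  have hbiUnion : headNbrs E V₁ v = (E.filter (v ∈ ·)).biUnion (· ∩ V₁) := by
    ext u
    simp only [mem_headNbrs, mem_biUnion, mem_filter, mem_inter]
    constructor
    · rintro ⟨huV, e, he, hve, hue⟩
      exact ⟨e, ⟨he, hve⟩, hue, huV⟩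
    · rintro ⟨e, ⟨he, hve⟩, hue, huV⟩
      exact ⟨huV, e, he, hve, hue⟩
  have hdisj : ((E.filter (v ∈ ·) : Finset (Finset α)) : Set (Finset α)).PairwiseDisjoint
      (· ∩ V₁) := by
    intro e₁ he₁ e₂ he₂ hne
    rw [mem_coe, mem_filter] at he₁ he₂
    refine disjoint_left.mpr fun u hu₁ hu₂ => hne ?_
    rw [mem_inter] at hu₁ hu₂
    exact hL.eq_of_mem_of_mem he₁.1 he₂.1 (ne_of_mem_of_not_mem hu₁.2 hv) hu₁.1 he₁.2 hu₂.1 he₂.2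
  rw [hbiUnion, card_biUnion hdisj, sum_congr rfl fun e he => hhead e (mem_filter.mp he).1,
    sum_const, smul_eq_mul, mul_one, hdeg]

/-- If `b ≠ b'`, the edges `e₁`, `e₂` through `a'` close a Berge triangle with `e`, or coincide
and then meet `e` in two vertices. -/
theorem eq_of_joined_to_two_heads {E : Finset (Finset α)} {V₁ : Finset α} (hL : LinearH E)
    (hhead : ∀ e ∈ E, (e ∩ V₁).card ≤ 1) (hC3 : ¬ HasBergeC3 E)
    {a a' b b' : α} (ha : a ∈ V₁) (ha' : a' ∈ V₁) (haa' : a ≠ a')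
    {e e₁ e₂ : Finset α} (he : e ∈ E) (he₁ : e₁ ∈ E) (he₂ : e₂ ∈ E)
    (hae : a ∈ e) (hbe : b ∈ e) (hb'e : b' ∈ e)
    (ha'e₁ : a' ∈ e₁) (hbe₁ : b ∈ e₁) (ha'e₂ : a' ∈ e₂) (hb'e₂ : b' ∈ e₂) : b = b' := by
  by_contra hbb'
  have hne : ∀ f ∈ E, a' ∈ f → e ≠ f := by
    rintro f hf ha'f rfl
    exact haa' (eq_of_mem_inter_of_card_le_one (hhead e he) hae ha ha'f ha')
  have hba' : b ≠ a' := by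
    rintro rfl
    exact haa' (eq_of_mem_inter_of_card_le_one (hhead e he) hae ha hbe ha')
  have hb'a' : b' ≠ a' := by
    rintro rfl
    exact haa' (eq_of_mem_inter_of_card_le_one (hhead e he) hae ha hb'e ha')
  by_cases h₁₂ : e₁ = e₂
  · subst h₁₂
    exact hne e₁ he₁ ha'e₁ (hL.eq_of_mem_of_mem he he₁ hbb' hbe hb'e hbe₁ hb'e₂)
  · exact hC3 ⟨e, he, e₂, he₂, e₁, he₁, b, b', a', hne e₂ he₂ ha'e₂, Ne.symm h₁₂,
      hne e₁ he₁ ha'e₁, hbb', hb'a', hba', hbe, hb'e, hb'e₂, ha'e₂, ha'e₁, hbe₁⟩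

/-- Each pair `(a, b)` gets an arbitrary edge through both; two pairs given the same edge share
its head, and then their vertex in `V₂` by `eq_of_joined_to_two_heads`. -/
theorem hasBergeKstIn_of_subset_headNbrs {E : Finset (Finset α)} {V₁ V₂ : Finset α}
    (hL : LinearH E) (hhead : ∀ e ∈ E, (e ∩ V₁).card ≤ 1) (hdisj : Disjoint V₁ V₂)
    (hC3 : ¬ HasBergeC3 E) {S T : Finset α} (hS : S ⊆ V₁) (hT : T ⊆ V₂) (hS2 : 2 ≤ S.card)
    (hST : ∀ b ∈ T, S ⊆ headNbrs E V₁ b) : HasBergeKstIn E S.card T.card V₁ V₂ := by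
  have hjoin : ∀ a ∈ S, ∀ b ∈ T, ∃ e ∈ E, a ∈ e ∧ b ∈ e := fun a ha b hb => by
    obtain ⟨-, e, he, hbe, hae⟩ := mem_headNbrs.mp (hST b hb ha)
    exact ⟨e, he, hae, hbe⟩
  choose! f hfE hfa hfb using hjoin
  refine ⟨S, T, f, hS, hT, rfl, rfl, hdisj.mono hS hT, fun a ha b hb =>
    ⟨hfE a ha b hb, hfa a ha b hb, hfb a ha b hb⟩, fun a ha b hb a₀ ha₀ b₀ hb₀ heq => ?_⟩
  have haa₀ : a = a₀ := eq_of_mem_inter_of_card_le_one (hhead _ (hfE a ha b hb))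
    (hfa a ha b hb) (hS ha) (heq ▸ hfa a₀ ha₀ b₀ hb₀) (hS ha₀)
  subst haa₀
  refine ⟨rfl, ?_⟩
  obtain ⟨a', ha'S, ha'a⟩ := exists_mem_ne hS2 a
  obtain ⟨-, e₁, he₁, hbe₁, ha'e₁⟩ := mem_headNbrs.mp (hST b hb ha'S)
  obtain ⟨-, e₂, he₂, hbe₂, ha'e₂⟩ := mem_headNbrs.mp (hST b₀ hb₀ ha'S)
  exact eq_of_joined_to_two_heads hL hhead hC3 (hS ha) (hS ha'S) (Ne.symm ha'a)
    (hfE a ha b hb) he₁ he₂ (hfa a ha b hb) (hfb a ha b hb) (heq ▸ hfb a ha b₀ hb₀)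
    ha'e₁ hbe₁ ha'e₂ hbe₂

theorem card_filter_subset_headNbrs_lt {E : Finset (Finset α)} {V₁ V₂ : Finset α} {s t : ℕ}
    (hL : LinearH E) (hhead : ∀ e ∈ E, (e ∩ V₁).card ≤ 1) (hdisj : Disjoint V₁ V₂)
    (hC3 : ¬ HasBergeC3 E) (hKst : ¬ HasBergeKstIn E s t V₁ V₂) (hs : 2 ≤ s)
    {S : Finset α} (hS : S ∈ V₁.powersetCard s) :
    (V₂.filter (S ⊆ headNbrs E V₁ ·)).card < t := by
  obtain ⟨hSV₁, rfl⟩ := mem_powersetCard.mp hS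
  by_contra! hbig
  obtain ⟨T, hT, rfl⟩ := exists_subset_card_eq hbig
  exact hKst (hasBergeKstIn_of_subset_headNbrs hL hhead hdisj hC3 hSV₁
    (hT.trans (filter_subset _ _)) hs fun b hb => (mem_filter.mp (hT hb)).2)

end

theorem stmt10_general {V : Type*} [Fintype V] [DecidableEq V]
    (E : Finset (Finset V)) (r s t m : ℕ) (V₁ V₂ : Finset V)
    (hL : LinearH E) (hbi : HmBipartite E r V₁ V₂)
    (hm : V₁.card = m) (hs : 2 ≤ s)
    (hC3 : ¬ HasBergeC3 E) (hKst : ¬ HasBergeKstIn E s t V₁ V₂) :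
    ∑ v ∈ V₂, (hdeg E v).choose s ≤ (t - 1) * m.choose s := by
  obtain ⟨hdisj, -, hedge⟩ := hbi
  have hhead : ∀ e ∈ E, (e ∩ V₁).card = 1 := fun e he => (hedge e he).1
  have hhead_le : ∀ e ∈ E, (e ∩ V₁).card ≤ 1 := fun e he => (hhead e he).le
  calc ∑ v ∈ V₂, (hdeg E v).choose s
      = ∑ v ∈ V₂, (headNbrs E V₁ v).card.choose s := sum_congr rfl fun v hv => by
        rw [card_headNbrs hL hhead (disjoint_right.mp hdisj hv)]
    _ = ∑ S ∈ V₁.powersetCard s, (V₂.filter (S ⊆ headNbrs E V₁ ·)).card :=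
        sum_card_choose_eq_sum_card_filter_subset V₁ V₂ _ (fun v _ => filter_subset _ _) s
    _ ≤ (V₁.powersetCard s).card • (t - 1) := sum_le_card_nsmul _ _ _ fun S hS =>
        Nat.le_sub_one_of_lt (card_filter_subset_headNbrs_lt hL hhead_le hdisj hC3 hKst hs hS)
    _ = (t - 1) * m.choose s := by rw [card_powersetCard, hm, smul_eq_mul, mul_comm]

/-- Zarankiewicz-type double counting in hm-bipartite hypergraphs. -/
theorem stmt10 {V : Type*} [Fintype V] [DecidableEq V]
    (E : Finset (Finset V)) (r s t m n : ℕ) (V₁ V₂ : Finset V)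
    (hU : Uniform E r) (hL : LinearH E) (hbi : HmBipartite E r V₁ V₂)
    (hm : V₁.card = m) (hn : V₂.card = n) (hs : 2 ≤ s) (ht : 2 ≤ t) (hms : s ≤ m)
    (hC3 : ¬ HasBergeC3 E) (hKst : ¬ HasBergeKstIn E s t V₁ V₂) :
    ∑ v ∈ V₂, (hdeg E v).choose s ≤ (t - 1) * m.choose s :=
  stmt10_general E r s t m V₁ V₂ hL hbi hm hs hC3 hKst
end

section
/- Let H be an (m,n)-hm-bipartite linear r-uniform hypergraph with head part of size m and mass part of size n that is Berge-C₃-free and exact Berge-K_{s,t}-free, where s, t ≥ 2. Then e(H) ≤ ((t−1)^(1/s)/(r−1))·m·n^(1−1/s) + ((s−1)/(r−1))·n. -/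
open Finset

variable {V : Type*} [Fintype V] [DecidableEq V]

/-!
Linearity makes the degree of a mass vertex `b` equal to the number of heads adjacent to `b`.
An `s`-set of heads has at most `t - 1` common mass neighbours: `t` of them would span a
Berge-`K_{s,t}`, the edges being distinct because two mass vertices of one edge with a second
common head would span a Berge triangle. Double counting pairs (mass vertex, `s`-set of its
heads) gives `∑_b C(d(b), s) ≤ (t - 1) C(m, s)`. Since `(d - s + 1)^s ≤ s! C(d, s)` and
`s! C(m, s) ≤ m^s`, the power mean inequality bounds `∑_b (d(b) - s + 1)` by
`(t - 1)^{1/s} m n^{1 - 1/s}`, while `∑_b d(b) = (r - 1) e(H)`.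
-/

theorem mem_nbrs {E : Finset (Finset V)} {u v : V} :
    u ∈ nbrs E v ↔ u ≠ v ∧ ∃ e ∈ E, v ∈ e ∧ u ∈ e := by
  simp [nbrs]

namespace LinearH

theorem eq_of_mem_of_mem_s11 {W : Type*} [DecidableEq W] {E : Finset (Finset W)} (hL : LinearH E)
    {e e' : Finset W} (he : e ∈ E) (he' : e' ∈ E) {a b : W} (hab : a ≠ b) (ha : a ∈ e)
    (hb : b ∈ e) (ha' : a ∈ e') (hb' : b ∈ e') : e = e' := by
  by_contra hne
  exact (hL e he e' he' hne).not_gt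
    (one_lt_card.2 ⟨a, mem_inter.2 ⟨ha, ha'⟩, b, mem_inter.2 ⟨hb, hb'⟩, hab⟩)

theorem mem_of_mem_nbrs_of_mem_nbrs {E : Finset (Finset V)} (hL : LinearH E)
    (hC3 : ¬ HasBergeC3 E) {e : Finset V} (he : e ∈ E) {b b' c : V} (hb : b ∈ e) (hb' : b' ∈ e)
    (hbb' : b ≠ b') (hcb : c ∈ nbrs E b) (hcb' : c ∈ nbrs E b') : c ∈ e := by
  by_contra hce
  obtain ⟨hcb_ne, e₁, he₁, hbe₁, hce₁⟩ := mem_nbrs.1 hcb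
  obtain ⟨hcb'_ne, e₂, he₂, hb'e₂, hce₂⟩ := mem_nbrs.1 hcb'
  have hee₁ : e ≠ e₁ := by rintro rfl; exact hce hce₁
  have hee₂ : e ≠ e₂ := by rintro rfl; exact hce hce₂
  have he₂e₁ : e₂ ≠ e₁ := by
    rintro rfl
    exact hee₂ (hL.eq_of_mem_of_mem_s11 he he₂ hbb' hb hb' hbe₁ hb'e₂)
  exact hC3 ⟨e, he, e₂, he₂, e₁, he₁, b, b', c, hee₂, he₂e₁, hee₁, hbb', hcb'_ne.symm,
    hcb_ne.symm, hb, hb', hb'e₂, hce₂, hce₁, hbe₁⟩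

end LinearH

namespace HmBipartite

variable {E : Finset (Finset V)} {r : ℕ} {V₁ V₂ : Finset V}

theorem eq_of_mem_left (h : HmBipartite E r V₁ V₂) {e : Finset V} (he : e ∈ E) {a a' : V}
    (ha : a ∈ e) (ha₁ : a ∈ V₁) (ha' : a' ∈ e) (ha'₁ : a' ∈ V₁) : a = a' :=
  card_le_one.1 (h.2.2 e he).1.le a (mem_inter.2 ⟨ha, ha₁⟩) a' (mem_inter.2 ⟨ha', ha'₁⟩)

theorem ne_of_mem_left_of_mem_right (h : HmBipartite E r V₁ V₂) {a b : V} (ha : a ∈ V₁)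
    (hb : b ∈ V₂) : a ≠ b :=
  (ne_of_mem_of_not_mem hb (disjoint_left.1 h.1 ha)).symm

theorem exists_mem_left (h : HmBipartite E r V₁ V₂) {e : Finset V} (he : e ∈ E) :
    ∃ a ∈ V₁, a ∈ e := by
  obtain ⟨a, ha⟩ := card_pos.1 ((h.2.2 e he).1 ▸ one_pos : 0 < #(e ∩ V₁))
  exact ⟨a, (mem_inter.1 ha).2, (mem_inter.1 ha).1⟩

theorem sum_hdeg_eq (h : HmBipartite E r V₁ V₂) : ∑ b ∈ V₂, hdeg E b = #E * (r - 1) := calc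
  ∑ b ∈ V₂, hdeg E b = ∑ e ∈ E, #{b ∈ V₂ | b ∈ e} :=
    sum_card_bipartiteAbove_eq_sum_card_bipartiteBelow (fun b e => b ∈ e)
  _ = ∑ e ∈ E, (r - 1) := sum_congr rfl fun e he => by
    rw [filter_mem_eq_inter, inter_comm, (h.2.2 e he).2]
  _ = #E * (r - 1) := by rw [sum_const, smul_eq_mul]

theorem hdeg_eq_card_nbrs_inter (h : HmBipartite E r V₁ V₂) (hL : LinearH E) {b : V}
    (hb : b ∈ V₂) : hdeg E b = #(nbrs E b ∩ V₁) := by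
  refine card_bij (fun e he => (h.exists_mem_left (mem_filter.1 he).1).choose) ?_ ?_ ?_
  · intro e he
    obtain ⟨heE, hbe⟩ := mem_filter.1 he
    obtain ⟨ha₁, hae⟩ := (h.exists_mem_left heE).choose_spec
    exact mem_inter.2 ⟨mem_nbrs.2 ⟨h.ne_of_mem_left_of_mem_right ha₁ hb, e, heE, hbe, hae⟩, ha₁⟩
  · intro e he e' he' hee'
    obtain ⟨heE, hbe⟩ := mem_filter.1 he
    obtain ⟨he'E, hbe'⟩ := mem_filter.1 he'
    obtain ⟨ha₁, hae⟩ := (h.exists_mem_left heE).choose_spec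
    obtain ⟨-, hae'⟩ := (h.exists_mem_left he'E).choose_spec
    rw [← hee'] at hae'
    exact hL.eq_of_mem_of_mem_s11 heE he'E (h.ne_of_mem_left_of_mem_right ha₁ hb)
      hae hbe hae' hbe'
  · intro a ha
    obtain ⟨ha, ha₁⟩ := mem_inter.1 ha
    obtain ⟨-, e, heE, hbe, hae⟩ := mem_nbrs.1 ha
    obtain ⟨ha'₁, ha'e⟩ := (h.exists_mem_left heE).choose_spec
    exact ⟨e, mem_filter.2 ⟨heE, hbe⟩, h.eq_of_mem_left heE ha'e ha'₁ hae ha₁⟩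

theorem hasBergeKstIn_of_subset_nbrs (h : HmBipartite E r V₁ V₂) (hL : LinearH E)
    (hC3 : ¬ HasBergeC3 E) {S T : Finset V} (hS : S ⊆ V₁) (hT : T ⊆ V₂) (hS₂ : 1 < #S)
    (hST : ∀ b ∈ T, S ⊆ nbrs E b) : HasBergeKstIn E #S #T V₁ V₂ := by
  have hex : ∀ a b, ∃ e : Finset V, a ∈ S → b ∈ T → e ∈ E ∧ a ∈ e ∧ b ∈ e := by
    intro a b
    by_cases hab : a ∈ S ∧ b ∈ T
    · obtain ⟨-, e, he, hbe, hae⟩ := mem_nbrs.1 (hST b hab.2 hab.1)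
      exact ⟨e, fun _ _ => ⟨he, hae, hbe⟩⟩
    · exact ⟨∅, fun ha hb => (hab ⟨ha, hb⟩).elim⟩
  choose f hf' using hex
  have hf : ∀ a ∈ S, ∀ b ∈ T, f a b ∈ E ∧ a ∈ f a b ∧ b ∈ f a b :=
    fun a ha b hb => hf' a b ha hb
  refine ⟨S, T, f, hS, hT, rfl, rfl, h.1.mono hS hT, hf, ?_⟩
  intro a ha b hb a' ha' b' hb' hab
  obtain ⟨he, hae, hbe⟩ := hf a ha b hb
  obtain ⟨-, ha'e, hb'e⟩ := hf a' ha' b' hb'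
  rw [← hab] at ha'e hb'e
  refine ⟨h.eq_of_mem_left he hae (hS ha) ha'e (hS ha'), ?_⟩
  by_contra hbb'
  -- a second head of `S`, adjacent to both `b` and `b'`, would have to lie in the same edge
  obtain ⟨c, hc, hca⟩ := exists_mem_ne hS₂ a
  have hce := hL.mem_of_mem_nbrs_of_mem_nbrs hC3 he hbe hb'e hbb' (hST b hb hc) (hST b' hb' hc)
  exact hca (h.eq_of_mem_left he hce (hS hc) hae (hS ha))

theorem card_filter_subset_nbrs_lt (h : HmBipartite E r V₁ V₂) (hL : LinearH E)
    (hC3 : ¬ HasBergeC3 E) {s t : ℕ} (hKst : ¬ HasBergeKstIn E s t V₁ V₂) (hs : 2 ≤ s)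
    {S : Finset V} (hS : S ⊆ V₁) (hSs : #S = s) : #{b ∈ V₂ | S ⊆ nbrs E b} < t := by
  by_contra! hle
  obtain ⟨T, hT, rfl⟩ := exists_subset_card_eq hle
  subst hSs
  exact hKst (h.hasBergeKstIn_of_subset_nbrs hL hC3 hS (hT.trans (filter_subset _ _)) hs
    fun b hb => (mem_filter.1 (hT hb)).2)

theorem sum_choose_hdeg_le (h : HmBipartite E r V₁ V₂) (hL : LinearH E)
    (hC3 : ¬ HasBergeC3 E) {s t : ℕ} (hKst : ¬ HasBergeKstIn E s t V₁ V₂) (hs : 2 ≤ s) :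
    ∑ b ∈ V₂, (hdeg E b).choose s ≤ (t - 1) * (#V₁).choose s := calc
  ∑ b ∈ V₂, (hdeg E b).choose s = ∑ b ∈ V₂, #{S ∈ V₁.powersetCard s | S ⊆ nbrs E b} :=
    sum_congr rfl fun b hb => by
      rw [h.hdeg_eq_card_nbrs_inter hL hb, ← card_powersetCard]
      congr 1
      ext S
      simp only [mem_powersetCard, mem_filter, subset_inter_iff]
      tauto
  _ = ∑ S ∈ V₁.powersetCard s, #{b ∈ V₂ | S ⊆ nbrs E b} :=
    sum_card_bipartiteAbove_eq_sum_card_bipartiteBelow (fun b S => S ⊆ nbrs E b)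
  _ ≤ ∑ S ∈ V₁.powersetCard s, (t - 1) := sum_le_sum fun S hS => by
    obtain ⟨hS, hSs⟩ := mem_powersetCard.1 hS
    exact Nat.le_sub_one_of_lt (h.card_filter_subset_nbrs_lt hL hC3 hKst hs hS hSs)
  _ = (t - 1) * (#V₁).choose s := by rw [sum_const, card_powersetCard, smul_eq_mul, mul_comm]

end HmBipartite

theorem mul_rpow_one_div_pow {K x y : ℝ} (hK : 0 ≤ K) (hy : 0 ≤ y) {s : ℕ} (hs : s ≠ 0) :
    (K ^ ((1:ℝ) / s) * x * y ^ (1 - (1:ℝ) / s)) ^ s = K * x ^ s * y ^ (s - 1) := by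
  have hexp : (1 - (1:ℝ) / s) * s = ((s - 1 : ℕ) : ℝ) := by
    rw [Nat.cast_pred (Nat.pos_of_ne_zero hs)]
    field_simp
  rw [mul_pow, mul_pow, one_div, Real.rpow_inv_natCast_pow hK hs, ← Real.rpow_natCast (y ^ _) s,
    ← Real.rpow_mul hy, ← one_div, hexp, Real.rpow_natCast]

theorem sum_le_of_sum_choose_le {ι : Type*} (A : Finset ι) (d : ι → ℕ) {s m : ℕ} {K : ℝ}
    (hs : s ≠ 0) (hK : 0 ≤ K) (h : ∑ i ∈ A, ((d i).choose s : ℝ) ≤ K * m.choose s) :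
    ∑ i ∈ A, (d i : ℝ) ≤
      K ^ ((1:ℝ) / s) * m * (#A : ℝ) ^ (1 - (1:ℝ) / s) + ((s:ℝ) - 1) * #A := by
  -- truncated subtraction: `g i` is the excess of `d i` over `s - 1`
  set g : ι → ℝ := fun i => ((d i + 1 - s : ℕ) : ℝ)
  have hg : ∀ i, 0 ≤ g i := fun i => Nat.cast_nonneg _
  have hd : ∀ i, (d i : ℝ) ≤ g i + ((s:ℝ) - 1) := fun i => by
    have : (d i : ℝ) + 1 ≤ g i + s := by
      simp only [g]
      exact_mod_cast (by omega : d i + 1 ≤ d i + 1 - s + s)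
    linarith
  have hgs : ∑ i ∈ A, g i ^ s ≤ Nat.factorial s * (K * m.choose s) := calc
    ∑ i ∈ A, g i ^ s ≤ ∑ i ∈ A, (Nat.factorial s : ℝ) * (d i).choose s := by
      refine sum_le_sum fun i _ => ?_
      simp only [g]
      exact_mod_cast (Nat.pow_sub_le_descFactorial (d i) s).trans
        (Nat.descFactorial_eq_factorial_mul_choose (d i) s).le
    _ ≤ Nat.factorial s * (K * m.choose s) := by
      rw [← mul_sum]
      gcongr
  have hpow : (∑ i ∈ A, g i) ^ s ≤ (K ^ ((1:ℝ) / s) * m * (#A : ℝ) ^ (1 - (1:ℝ) / s)) ^ s := by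
    rw [mul_rpow_one_div_pow hK (Nat.cast_nonneg _) hs]
    obtain ⟨k, rfl⟩ := Nat.exists_eq_add_one_of_ne_zero hs
    calc (∑ i ∈ A, g i) ^ (k + 1) ≤ (#A : ℝ) ^ k * ∑ i ∈ A, g i ^ (k + 1) :=
          pow_sum_le_card_mul_sum_pow (fun i _ => hg i) k
      _ ≤ (#A : ℝ) ^ k * (K * m ^ (k + 1)) := by
          gcongr
          refine hgs.trans ?_
          rw [mul_left_comm]
          gcongr
          rw [← le_div_iff₀' (by positivity)]
          exact Nat.choose_le_pow_div _ _
      _ = K * m ^ (k + 1) * (#A : ℝ) ^ (k + 1 - 1) := by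
          rw [Nat.add_sub_cancel]
          ring
  have hsum := (pow_le_pow_iff_left₀ (sum_nonneg fun i _ => hg i)
    (by positivity) hs).1 hpow
  calc ∑ i ∈ A, (d i : ℝ) ≤ ∑ i ∈ A, (g i + ((s:ℝ) - 1)) := sum_le_sum fun i _ => hd i
    _ = ∑ i ∈ A, g i + ((s:ℝ) - 1) * #A := by
      rw [sum_add_distrib, sum_const, nsmul_eq_mul, mul_comm]
    _ ≤ _ := by linarith

theorem stmt11_general {V : Type*} [Fintype V] [DecidableEq V]
    (E : Finset (Finset V)) (r s t m n : ℕ) (V₁ V₂ : Finset V)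
    (hr : 2 ≤ r) (hL : LinearH E) (hbi : HmBipartite E r V₁ V₂)
    (hm : V₁.card = m) (hn : V₂.card = n) (hs : 2 ≤ s) (ht : 2 ≤ t)
    (hC3 : ¬ HasBergeC3 E) (hKst : ¬ HasBergeKstIn E s t V₁ V₂) :
    (E.card : ℝ) ≤ ((t:ℝ) - 1) ^ ((1:ℝ)/(s:ℝ)) / ((r:ℝ) - 1) * (m:ℝ) *
        (n:ℝ) ^ (1 - (1:ℝ)/(s:ℝ)) + ((s:ℝ) - 1) / ((r:ℝ) - 1) * (n:ℝ) := by
  subst hm hn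
  have hr₁ : (0:ℝ) < r - 1 := sub_pos.2 (by exact_mod_cast (by omega : 1 < r))
  have hdeg_sum : (#E : ℝ) * (r - 1) = ∑ b ∈ V₂, (hdeg E b : ℝ) := by
    rw [← Nat.cast_pred (by omega), ← Nat.cast_mul, ← hbi.sum_hdeg_eq, Nat.cast_sum]
  have hchoose : ∑ b ∈ V₂, ((hdeg E b).choose s : ℝ) ≤ ((t:ℝ) - 1) * (#V₁).choose s := by
    rw [← Nat.cast_pred (by omega)]
    exact_mod_cast hbi.sum_choose_hdeg_le hL hC3 hKst hs
  have ht₁ : (0:ℝ) ≤ t - 1 := sub_nonneg.2 (by exact_mod_cast (by omega : 1 ≤ t))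
  have hdeg_le := sum_le_of_sum_choose_le V₂ (hdeg E) (by omega) ht₁ hchoose
  rw [div_mul_eq_mul_div, div_mul_eq_mul_div, div_mul_eq_mul_div, ← add_div,
    le_div_iff₀ hr₁]
  linarith

/-- edge bound for hm-bipartite exact Berge-K_{s,t}-free, Berge-C₃-free
linear hypergraphs. -/
theorem stmt11 {V : Type*} [Fintype V] [DecidableEq V]
    (E : Finset (Finset V)) (r s t m n : ℕ) (V₁ V₂ : Finset V)
    (hr : 2 ≤ r) (hU : Uniform E r) (hL : LinearH E) (hbi : HmBipartite E r V₁ V₂)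
    (hm : V₁.card = m) (hn : V₂.card = n) (hs : 2 ≤ s) (ht : 2 ≤ t)
    (hC3 : ¬ HasBergeC3 E) (hKst : ¬ HasBergeKstIn E s t V₁ V₂) :
    (E.card : ℝ) ≤ ((t:ℝ) - 1) ^ ((1:ℝ)/(s:ℝ)) / ((r:ℝ) - 1) * (m:ℝ) *
        (n:ℝ) ^ (1 - (1:ℝ)/(s:ℝ)) + ((s:ℝ) - 1) / ((r:ℝ) - 1) * (n:ℝ) :=
  stmt11_general E r s t m n V₁ V₂ hr hL hbi hm hn hs ht hC3 hKst
end
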